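/- Let u be a minimal generator of I = I_{c,(n,d,t)} with block decomposition msupp(u) = B_1 ⊔ ... ⊔ B_r. Then an index i satisfies: there exists k > i with x_k | u and x_i·u/x_k ∈ I and x_i·u/x_k >_lex u, if and only if i belongs to some gap interval of u, where the j-th gap interval (1 ≤ j ≤ r−1) is [max(B_j)+t, min(B_{j+1})−1] if |B_j| < c and [max(B_j)+t+1, min(B_{j+1})−1] if |B_j| = c, and the 0-th gap interval is [1, min(B_1)−1]. -/

import Mathlib

/-- A list (representing a weakly increasing multiset) is `t`-spread if
successive entries differ by at least `t`. -/
def TSpread (t : ℕ) (A : List ℕ) : Prop :=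
  A.Chain' (fun a b => a + t ≤ b)

/-- A block (for the parameter `t`) is a nonempty run whose successive
differences are exactly `t`. -/
def IsBlock (t : ℕ) (B : List ℕ) : Prop :=
  B ≠ [] ∧ B.Chain' (fun a b => b = a + t)

/-- `Bs` is the decomposition of `A` into maximal blocks. -/
def IsBlockDecomp (t : ℕ) (A : List ℕ) (Bs : List (List ℕ)) : Prop :=
  A = Bs.flatten ∧ (∀ B ∈ Bs, IsBlock t B) ∧
    Bs.Chain' (fun B C => ∀ x ∈ B.getLast?, ∀ y ∈ C.head?, x + t < y)

/-- `A` is `c`-bounded: every block of its (unique) maximal block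
decomposition has size at most `c`. -/
def CBounded (c t : ℕ) (A : List ℕ) : Prop :=
  ∀ Bs, IsBlockDecomp t A Bs → ∀ B ∈ Bs, B.length ≤ c

/-- The set of (sorted index lists of) minimal monomial generators of the
`c`-bounded `t`-spread Veronese ideal `I_{c,(n,d,t)}`. -/
def Gen (c n d t : ℕ) : Set (List ℕ) :=
  {A | A.length = d ∧ TSpread t A ∧ CBounded c t A ∧ ∀ i ∈ A, 1 ≤ i ∧ i ≤ n}

/-!
Let `k` be the least index of `u` above `i`. Exchanging `x_k` for `x_i` keeps `u` inside `G(I)`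
exactly when `i ≥ 1`, every index of `u` up to `i` lies at least `t` below `i`, and `x_i` does
not prolong a run `m, m + t, …, m + (c - 1) t` of `u` to `c + 1` terms (`InGap`); conversely,
any admissible exchange at all forces these conditions.

`c`-boundedness is tested on such runs: a `t`-spread list is `c`-bounded iff it contains no run
of `c + 1` terms, since a run always lies inside a single block. Read off on the blocks, the
conditions say that `k` heads a block `B_{j+1}` (or `B_1`), that `max B_j + t ≤ i`, and that
equality is excluded precisely when `B_j` already has `c` elements.
-/

open List

theorem List.Pairwise.rel_or_rel_of_subperm {α : Type*} {R : α → α → Prop} {l : List α}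
    {a b : α} (hl : l.Pairwise R) (hab : [a, b] <+~ l) : R a b ∨ R b a := by
  obtain ⟨l', hperm, hsub⟩ := hab
  simpa using ((hl.sublist hsub).imp Or.inl).perm hperm fun h => h.symm

theorem Multiset.le_of_le_add_of_forall_notMem {α : Type*} [DecidableEq α]
    {s a b : Multiset α} (h : s ≤ a + b) (hb : ∀ x ∈ s, x ∉ b) : s ≤ a := by
  rw [Multiset.le_iff_count] at h ⊢
  intro x
  by_cases hx : x ∈ s
  · simpa [Multiset.count_eq_zero.2 (hb x hx)] using h x
  · simp [Multiset.count_eq_zero.2 hx]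

theorem List.exists_eq_append_cons_of_lt_mem {α : Type*} [LinearOrder α] {u : List α} {i a : α}
    (ha : a ∈ u) (hia : i < a) :
    ∃ P k S, u = P ++ k :: S ∧ (∀ x ∈ P, x ≤ i) ∧ i < k := by
  obtain ⟨k, S, hdrop⟩ : ∃ k S, u.dropWhile (· ≤ i) = k :: S := by
    cases h : u.dropWhile (· ≤ i) with
    | nil => exact absurd (by simpa using dropWhile_eq_nil_iff.1 h a ha) (not_le.2 hia)
    | cons k S => exact ⟨k, S, rfl⟩
  refine ⟨u.takeWhile (· ≤ i), k, S, by rw [← hdrop, takeWhile_append_dropWhile],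
    fun x hx => by simpa using mem_takeWhile_imp hx, ?_⟩
  simpa [hdrop] using head_dropWhile_not (· ≤ i) (l := u) (by simp [hdrop])

theorem List.headD_range'_succ {h L t : ℕ} : (range' h (L + 1) t).headD 0 = h := rfl

theorem List.getLastD_range'_succ {h L t : ℕ} : (range' h (L + 1) t).getLastD 0 = h + t * L := by
  rw [range'_concat, getLastD_concat]

theorem List.range'_succ_le_cons_iff {m c t : ℕ} {s : Multiset ℕ} :
    (range' m (c + 1) t : Multiset ℕ) ≤ (m + t * c) ::ₘ s ↔
      (range' m c t : Multiset ℕ) ≤ s := by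
  rw [range'_concat, Multiset.coe_eq_coe.2 (perm_append_singleton _ _), ← Multiset.cons_coe,
    Multiset.cons_le_cons_iff]

theorem tSpread_iff_pairwise {t : ℕ} {A : List ℕ} :
    TSpread t A ↔ A.Pairwise (fun a b => a + t ≤ b) :=
  have : Trans (fun a b : ℕ => a + t ≤ b) (fun a b => a + t ≤ b) (fun a b => a + t ≤ b) :=
    ⟨fun h h' => by omega⟩
  isChain_iff_pairwise

namespace IsBlock

variable {t : ℕ} {B : List ℕ}

theorem eq_range' (hB : IsBlock t B) : B = range' (B.headD 0) B.length t := by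
  obtain ⟨-, hB⟩ := hB
  induction B with
  | nil => rfl
  | cons a l ih =>
    cases l with
    | nil => rfl
    | cons b l =>
      obtain ⟨rfl, hl⟩ := isChain_cons_cons.1 hB
      exact congrArg (a :: ·) (ih hl)

theorem exists_eq_range' (hB : IsBlock t B) : ∃ h L, B = range' h (L + 1) t := by
  obtain ⟨L, hL⟩ := Nat.exists_eq_succ_of_ne_zero (length_pos_iff.2 hB.1).ne'
  exact ⟨_, L, hL ▸ hB.eq_range'⟩

theorem headD_mem (hB : IsBlock t B) : B.headD 0 ∈ B := by
  obtain ⟨h, L, rfl⟩ := hB.exists_eq_range'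
  simp [range'_succ]

theorem getLastD_mem (hB : IsBlock t B) : B.getLastD 0 ∈ B := by
  obtain ⟨h, L, rfl⟩ := hB.exists_eq_range'
  rw [getLastD_range'_succ]
  exact mem_range'.2 ⟨L, L.lt_succ_self, rfl⟩

theorem headD_le (hB : IsBlock t B) {x : ℕ} (hx : x ∈ B) : B.headD 0 ≤ x := by
  obtain ⟨h, L, rfl⟩ := hB.exists_eq_range'
  obtain ⟨a, -, rfl⟩ := mem_range'.1 hx
  exact Nat.le_add_right _ _

theorem le_getLastD (hB : IsBlock t B) {x : ℕ} (hx : x ∈ B) : x ≤ B.getLastD 0 := by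
  obtain ⟨h, L, rfl⟩ := hB.exists_eq_range'
  obtain ⟨a, ha, rfl⟩ := mem_range'.1 hx
  rw [getLastD_range'_succ]
  exact Nat.add_le_add_left (Nat.mul_le_mul_left t (Nat.lt_succ_iff.1 ha)) h

theorem getLastD_add (hB : IsBlock t B) : B.getLastD 0 + t = B.headD 0 + t * B.length := by
  obtain ⟨h, L, rfl⟩ := hB.exists_eq_range'
  rw [getLastD_range'_succ, headD_range'_succ, length_range']
  ring

end IsBlock

namespace IsBlockDecomp

variable {t : ℕ} {A : List ℕ} {Bs : List (List ℕ)}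

theorem isBlock (hd : IsBlockDecomp t A Bs) {j : ℕ} (hj : j < Bs.length) : IsBlock t Bs[j] :=
  hd.2.1 _ (getElem_mem hj)

theorem sublist (hd : IsBlockDecomp t A Bs) {B : List ℕ} (hB : B ∈ Bs) : B <+ A :=
  hd.1 ▸ sublist_flatten_of_mem hB

theorem mem_iff (hd : IsBlockDecomp t A Bs) {x : ℕ} :
    x ∈ A ↔ ∃ l, ∃ hl : l < Bs.length, x ∈ Bs[l] := by
  rw [hd.1, mem_flatten]
  constructor
  · rintro ⟨B, hB, hx⟩
    obtain ⟨l, hl, rfl⟩ := mem_iff_getElem.1 hB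
    exact ⟨l, hl, hx⟩
  · rintro ⟨l, hl, hx⟩
    exact ⟨_, getElem_mem hl, hx⟩

theorem pairwise (hd : IsBlockDecomp t A Bs) :
    Bs.Pairwise (fun B C => ∀ x ∈ B, ∀ y ∈ C, x + t < y) := by
  -- nonemptiness of the blocks makes the relation transitive
  let R : List ℕ → List ℕ → Prop := fun B C =>
    B ≠ [] ∧ C ≠ [] ∧ ∀ x ∈ B, ∀ y ∈ C, x + t < y
  have : Trans R R R := ⟨fun ⟨hB, hC, hBC⟩ ⟨_, hD, hCD⟩ => ⟨hB, hD, fun x hx z hz => by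
    obtain ⟨y, hy⟩ := exists_mem_of_ne_nil _ hC
    have := hBC x hx y hy
    have := hCD y hy z hz
    omega⟩⟩
  have hchain : Bs.IsChain R := hd.2.2.imp_of_mem_imp fun B C hB hC hBC => by
    obtain ⟨h, L, rfl⟩ := (hd.2.1 B hB).exists_eq_range'
    obtain ⟨h', L', rfl⟩ := (hd.2.1 C hC).exists_eq_range'
    have hlt := hBC (h + t * L) (by simp [range'_concat]) h' (by simp [range'_succ])
    refine ⟨by simp, by simp, fun x hx y hy => ?_⟩
    obtain ⟨a, ha, rfl⟩ := mem_range'.1 hx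
    obtain ⟨b, -, rfl⟩ := mem_range'.1 hy
    have := Nat.mul_le_mul_left t (Nat.lt_succ_iff.1 ha)
    omega
  exact (isChain_iff_pairwise.1 hchain).imp fun h => h.2.2

theorem add_lt_of_lt (hd : IsBlockDecomp t A Bs) {l j : ℕ} (hlj : l < j) (hj : j < Bs.length)
    {x y : ℕ} (hx : x ∈ Bs[l]) (hy : y ∈ Bs[j]) : x + t < y :=
  pairwise_iff_getElem.1 hd.pairwise l j _ hj hlj x hx y hy

theorem eq_of_mem_of_mem (hd : IsBlockDecomp t A Bs) {B C : List ℕ} (hB : B ∈ Bs)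
    (hC : C ∈ Bs) {x : ℕ} (hxB : x ∈ B) (hxC : x ∈ C) : B = C := by
  let R : List ℕ → List ℕ → Prop := fun B C => ∀ x ∈ B, ∀ y ∈ C, x + t < y
  have : Std.Symm fun B C => R B C ∨ R C B := ⟨fun _ _ h => h.symm⟩
  by_contra hne
  rcases (hd.pairwise.imp (S := fun B C => R B C ∨ R C B) Or.inl).forall hB hC hne with h | h
  · exact absurd (h x hxB x hxC) (by omega)
  · exact absurd (h x hxC x hxB) (by omega)

theorem le_getLastD_of_le (hd : IsBlockDecomp t A Bs) {l j : ℕ} (hlj : l ≤ j)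
    (hj : j < Bs.length) {x : ℕ} (hx : x ∈ Bs[l]) : x ≤ Bs[j].getLastD 0 := by
  rcases hlj.lt_or_eq with hlt | rfl
  · have := hd.add_lt_of_lt hlt hj hx (hd.isBlock hj).getLastD_mem
    omega
  · exact (hd.isBlock hj).le_getLastD hx

theorem headD_le_of_le (hd : IsBlockDecomp t A Bs) {j l : ℕ} (hjl : j ≤ l)
    (hl : l < Bs.length) {x : ℕ} (hx : x ∈ Bs[l]) : Bs[j].headD 0 ≤ x := by
  rcases hjl.lt_or_eq with hlt | rfl
  · have := hd.add_lt_of_lt hlt hl (hd.isBlock (hlt.trans hl)).headD_mem hx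
    omega
  · exact (hd.isBlock hl).headD_le hx

theorem eq_headD_of_add_lt (hd : IsBlockDecomp t A Bs) {l : ℕ} (hl : l < Bs.length) {k : ℕ}
    (hk : k ∈ Bs[l]) (hlt : ∀ y ∈ A, y < k → y + t < k) : k = Bs[l].headD 0 := by
  obtain ⟨h, L, hB⟩ := (hd.isBlock hl).exists_eq_range'
  rw [hB] at hk ⊢
  rw [headD_range'_succ]
  obtain ⟨a, ha, rfl⟩ := mem_range'.1 hk
  by_contra hne
  obtain ⟨a, rfl⟩ : ∃ a', a = a' + 1 :=
    Nat.exists_eq_succ_of_ne_zero (by rintro rfl; simp at hne)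
  have ht : t ≠ 0 := by rintro rfl; simp at hne
  have hprev : h + t * a ∈ A :=
    hd.mem_iff.2 ⟨l, hl, hB ▸ mem_range'.2 ⟨a, by omega, rfl⟩⟩
  have := hlt _ hprev (by rw [mul_add, mul_one]; omega)
  rw [mul_add, mul_one] at this
  omega

end IsBlockDecomp

theorem exists_range'_le_of_pairwise {t m L : ℕ} (hL : L ≠ 0) :
    ∀ {Bs : List (List ℕ)}, Bs.Pairwise (fun B C => ∀ x ∈ B, ∀ y ∈ C, x + t < y) →
      (range' m L t : Multiset ℕ) ≤ Bs.flatten →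
        ∃ B ∈ Bs, (range' m L t : Multiset ℕ) ≤ B
  | [], _, h => by simp_all
  | B :: Bs, hpw, h => by
    obtain ⟨hB, hpw⟩ := pairwise_cons.1 hpw
    rw [flatten_cons, ← Multiset.coe_add] at h
    have hmem : ∀ a < L, m + t * a ∈ B ++ Bs.flatten := fun a ha =>
      Multiset.mem_of_le h (by simpa using mem_range'.2 ⟨a, ha, rfl⟩)
    by_cases hm : m ∈ B
    · have hrun : ∀ a < L, m + t * a ∈ B := by
        intro a ha
        induction a with
        | zero => simpa using hm
        | succ a iha =>
          refine (mem_append.1 (hmem _ ha)).resolve_right fun hflat => ?_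
          obtain ⟨C, hC, hyC⟩ := mem_flatten.1 hflat
          have := hB C hC _ (iha (by omega)) _ hyC
          rw [mul_add] at this
          omega
      refine ⟨B, mem_cons_self, Multiset.le_of_le_add_of_forall_notMem h fun x hx hxBs => ?_⟩
      obtain ⟨a, ha, rfl⟩ := mem_range'.1 (by simpa using hx)
      obtain ⟨C, hC, hxC⟩ := mem_flatten.1 hxBs
      exact absurd (hB C hC _ (hrun a ha) _ hxC) (by omega)
    · obtain ⟨C, hC, hmC⟩ := mem_flatten.1
        ((mem_append.1 (by simpa using hmem 0 (Nat.pos_of_ne_zero hL))).resolve_left hm)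
      rw [add_comm] at h
      obtain ⟨B', hB', hle⟩ := exists_range'_le_of_pairwise hL hpw <|
        Multiset.le_of_le_add_of_forall_notMem h fun x hx hxB => by
          obtain ⟨a, -, rfl⟩ := mem_range'.1 (by simpa using hx)
          exact absurd (hB C hC _ hxB _ hmC) (by omega)
      exact ⟨B', mem_cons_of_mem _ hB', hle⟩

theorem exists_isBlockDecomp {t : ℕ} {A : List ℕ} (hA : TSpread t A) :
    ∃ Bs, IsBlockDecomp t A Bs := by
  let r : ℕ → ℕ → Bool := fun a b => b == a + t
  have hspread : (A.splitBy r).flatten.IsChain (fun a b => a + t ≤ b) :=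
    (flatten_splitBy r A).symm ▸ hA
  have hgroups := ((isChain_flatten (nil_notMem_splitBy r A)).1 hspread).2
  refine ⟨A.splitBy r, (flatten_splitBy r A).symm, fun B hB => ⟨ne_nil_of_mem_splitBy hB,
    (isChain_of_mem_splitBy hB).imp fun _ _ => eq_of_beq⟩,
    isChain_iff_getElem.2 fun n hn x hx y hy => ?_⟩
  obtain ⟨hne, hne', hr⟩ := isChain_iff_getElem.1 (isChain_getLast_head_splitBy r A) n hn
  have hxy := isChain_iff_getElem.1 hgroups n hn x hx y hy
  rw [getLast?_eq_some_getLast hne, Option.mem_some_iff] at hx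
  rw [head?_eq_some_head hne', Option.mem_some_iff] at hy
  subst hx hy
  simp only [r, beq_eq_false_iff_ne] at hr hxy ⊢
  omega

theorem cBounded_iff_forall_not_range'_le {c t : ℕ} {A : List ℕ} (hA : TSpread t A) :
    CBounded c t A ↔ ∀ m, ¬ (range' m (c + 1) t : Multiset ℕ) ≤ A := by
  constructor
  · intro hc m hm
    obtain ⟨Bs, hd⟩ := exists_isBlockDecomp hA
    obtain ⟨B, hB, hle⟩ := exists_range'_le_of_pairwise c.succ_ne_zero hd.pairwise (hd.1 ▸ hm)
    have := Multiset.card_le_card hle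
    have := hc Bs hd B hB
    simp only [Multiset.coe_card, length_range'] at *
    omega
  · intro h Bs hd B hB
    by_contra! hlen
    obtain ⟨m, L, rfl⟩ := (hd.2.1 B hB).exists_eq_range'
    exact h m (Multiset.coe_le.2
      ((range'_sublist_right.2 (by simpa using hlen)).trans (hd.sublist hB)).subperm)

/-- Membership of `i` in a gap interval of `u`, phrased without the block decomposition
(see `IsBlockDecomp.inGap_iff`). -/
def InGap (c t : ℕ) (u : List ℕ) (i : ℕ) : Prop :=
  1 ≤ i ∧ (∃ k ∈ u, i < k) ∧ (∀ p ∈ u, p ≤ i → p + t ≤ i) ∧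
    ∀ m, m + t * c = i → ¬ (range' m c t : Multiset ℕ) ≤ u

theorem inGap_of_exchange {c n d t : ℕ} {u v : List ℕ} {i k : ℕ} (hik : i < k) (hku : k ∈ u)
    (hv : v ∈ Gen c n d t) (huv : (v : Multiset ℕ) = i ::ₘ (u : Multiset ℕ).erase k) :
    InGap c t u i := by
  obtain ⟨-, hvs, hvc, hvb⟩ := hv
  have hiv : i ∈ v := by rw [← Multiset.mem_coe, huv]; exact Multiset.mem_cons_self _ _
  refine ⟨(hvb i hiv).1, ⟨k, hku, hik⟩, fun p hp hpi => ?_, fun m hm hle => ?_⟩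
  · have : [i, p] <+~ v := by
      rw [← Multiset.coe_le, huv, ← Multiset.cons_coe]
      exact Multiset.cons_le_cons i
        (Multiset.singleton_le.2 ((Multiset.mem_erase_of_ne (by omega)).2 hp))
    rcases (tSpread_iff_pairwise.1 hvs).rel_or_rel_of_subperm this with h | h <;> omega
  · refine (cBounded_iff_forall_not_range'_le hvs).1 hvc m ?_
    have hk : k ∉ range' m c t := fun hk => by
      obtain ⟨a, ha, rfl⟩ := mem_range'.1 hk
      have := Nat.mul_le_mul_left t ha.le
      omega
    rw [huv, ← hm, range'_succ_le_cons_iff,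
      ← Multiset.erase_of_notMem (show k ∉ (range' m c t : Multiset ℕ) from hk)]
    exact Multiset.erase_le_erase k hle

/-- A run in `i ::ₘ u.erase k` has to pass through `i`. It cannot go on to `i + t`: the least
index `k` of `u` above `i` has been removed, and `u` has no other index in `(i, i + t]`. -/
theorem not_range'_le_cons_erase {c t i k m : ℕ} {u : List ℕ}
    (hpw : u.Pairwise (fun a b => a + t ≤ b))
    (hc : ∀ m, ¬ (range' m (c + 1) t : Multiset ℕ) ≤ u) (hku : k ∈ u) (hik : i < k)
    (hmin : ∀ y ∈ u, i < y → k ≤ y)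
    (hrun : ∀ m, m + t * c = i → ¬ (range' m c t : Multiset ℕ) ≤ u) :
    ¬ (range' m (c + 1) t : Multiset ℕ) ≤ i ::ₘ (u : Multiset ℕ).erase k := by
  intro h
  have hiR : i ∈ range' m (c + 1) t := by
    by_contra hiR
    exact hc m (((Multiset.le_cons_of_notMem (by simpa using hiR)).1 h).trans
      (Multiset.erase_le k _))
  obtain ⟨a, ha, rfl⟩ := mem_range'.1 hiR
  by_cases hlast : t * a = t * c
  · rw [hlast, range'_succ_le_cons_iff] at h
    exact hrun m (by rw [hlast]) (h.trans (Multiset.erase_le k _))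
  · have hac : a < c := lt_of_le_of_ne (Nat.lt_succ_iff.1 ha) (by rintro rfl; exact hlast rfl)
    have ht : t ≠ 0 := by rintro rfl; simp at hlast
    have hnext : m + t * a + t ∈ (u : Multiset ℕ).erase k := by
      have hR : m + t * a + t ∈ range' m (c + 1) t :=
        mem_range'.2 ⟨a + 1, by omega, by ring⟩
      exact (Multiset.mem_cons.1 (Multiset.mem_of_le h (by simpa using hR))).resolve_left
        (by omega)
    have hpair : [k, m + t * a + t] <+~ u := by
      rw [← Multiset.coe_le, ← Multiset.cons_coe,
        ← Multiset.cons_erase (Multiset.mem_coe.2 hku)]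
      exact Multiset.cons_le_cons k (Multiset.singleton_le.2 hnext)
    have := hmin _ (Multiset.mem_of_le (Multiset.erase_le k _) hnext) (by omega)
    rcases hpw.rel_or_rel_of_subperm hpair with h | h <;> omega

theorem exchange_of_inGap {c n d t : ℕ} {u : List ℕ} {i : ℕ} (hu : u ∈ Gen c n d t)
    (hi : InGap c t u i) :
    ∃ k, i < k ∧ k ∈ u ∧ ∃ v ∈ Gen c n d t,
      (v : Multiset ℕ) = i ::ₘ (u : Multiset ℕ).erase k ∧ List.Lex (· < ·) v u := by
  obtain ⟨hlen, hus, huc, hub⟩ := hu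
  obtain ⟨hi1, ⟨k₀, hk₀, hik₀⟩, hspread, hrun⟩ := hi
  obtain ⟨P, k, S, hsplit, hP, hik⟩ := exists_eq_append_cons_of_lt_mem hk₀ hik₀
  have hpw := tSpread_iff_pairwise.1 hus
  rw [hsplit, pairwise_append, pairwise_cons] at hpw
  obtain ⟨hPpw, ⟨hkS, hSpw⟩, hcross⟩ := hpw
  have hku : k ∈ u := hsplit ▸ mem_append_right _ mem_cons_self
  have hmin : ∀ y ∈ u, i < y → k ≤ y := fun y hy hiy => by
    rcases mem_append.1 (hsplit ▸ hy) with hy | hy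
    · exact absurd (hP y hy) (by omega)
    · rcases mem_cons.1 hy with rfl | hy
      · exact le_rfl
      · have := hkS y hy; omega
  have hv : ((P ++ i :: S : List ℕ) : Multiset ℕ) = i ::ₘ (u : Multiset ℕ).erase k := by
    rw [hsplit, Multiset.coe_eq_coe.2 perm_middle, Multiset.coe_eq_coe.2 perm_middle,
      ← Multiset.cons_coe, ← Multiset.cons_coe, Multiset.erase_cons_head]
  have hvs : TSpread t (P ++ i :: S) := by
    rw [tSpread_iff_pairwise, pairwise_append, pairwise_cons]
    refine ⟨hPpw, ⟨fun y hy => by have := hkS y hy; omega, hSpw⟩, fun x hx y hy => ?_⟩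
    rcases mem_cons.1 hy with rfl | hy
    · exact hspread x (hsplit ▸ mem_append_left _ hx) (hP x hx)
    · exact hcross x hx y (mem_cons_of_mem _ hy)
  refine ⟨k, hik, hku, P ++ i :: S, ⟨?_, hvs, ?_, fun x hx => ?_⟩, hv,
    hsplit ▸ Lex.append_left _ (Lex.rel hik) P⟩
  · simpa [hsplit] using hlen
  · refine (cBounded_iff_forall_not_range'_le hvs).2 fun m hm => ?_
    rw [hv] at hm
    exact not_range'_le_cons_erase (tSpread_iff_pairwise.1 hus)
      ((cBounded_iff_forall_not_range'_le hus).1 huc) hku hik hmin hrun hm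
  · rcases mem_append.1 hx with hx | hx
    · exact hub x (hsplit ▸ mem_append_left _ hx)
    · rcases mem_cons.1 hx with rfl | hx
      · exact ⟨hi1, by have := (hub k hku).2; omega⟩
      · exact hub x (hsplit ▸ mem_append_right _ (mem_cons_of_mem _ hx))

theorem exists_exchange_iff_inGap {c n d t : ℕ} {u : List ℕ} {i : ℕ}
    (hu : u ∈ Gen c n d t) :
    (∃ k, i < k ∧ k ∈ u ∧ ∃ v ∈ Gen c n d t,
      (v : Multiset ℕ) = i ::ₘ (u : Multiset ℕ).erase k ∧ List.Lex (· < ·) v u) ↔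
      InGap c t u i :=
  ⟨fun ⟨_, hik, hku, _, hv, huv, _⟩ => inGap_of_exchange hik hku hv huv,
    exchange_of_inGap hu⟩

namespace IsBlockDecomp

variable {c t i : ℕ} {u : List ℕ} {Bs : List (List ℕ)}

theorem inGap_of_lt_headD (hd : IsBlockDecomp t u Bs) (hcb : CBounded c t u)
    (hBs : 0 < Bs.length) (hi1 : 1 ≤ i) (hi : i < Bs[0].headD 0) : InGap c t u i := by
  have hhead : ∀ x ∈ u, Bs[0].headD 0 ≤ x := fun x hx => by
    obtain ⟨l, hl, hxl⟩ := hd.mem_iff.1 hx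
    exact hd.headD_le_of_le l.zero_le hl hxl
  have hc : 0 < c :=
    (length_pos_iff.2 (hd.isBlock hBs).1).trans_le (hcb Bs hd _ (getElem_mem hBs))
  refine ⟨hi1, ⟨_, hd.mem_iff.2 ⟨0, hBs, (hd.isBlock hBs).headD_mem⟩, hi⟩,
    fun p hp hpi => absurd (hhead p hp) (by omega), fun m hm hle => ?_⟩
  have := hhead m (Multiset.mem_coe.1 (Multiset.mem_of_le hle
    (Multiset.mem_coe.2 (mem_range'.2 ⟨0, hc, by simp⟩))))
  omega

theorem inGap_of_getLastD_lt (hd : IsBlockDecomp t u Bs) (hcb : CBounded c t u)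
    (hpos : ∀ x ∈ u, 1 ≤ x) {j : ℕ} (hj : j + 1 < Bs.length)
    (hlow : Bs[j].getLastD 0 + t + (if Bs[j].length = c then 1 else 0) ≤ i)
    (hhigh : i < Bs[j + 1].headD 0) : InGap c t u i := by
  set M := Bs[j].getLastD 0
  have hMj : M ∈ Bs[j] := (hd.isBlock (by omega)).getLastD_mem
  have hMu : M ∈ u := hd.mem_iff.2 ⟨j, by omega, hMj⟩
  have hbelow : ∀ x ∈ u, x < Bs[j + 1].headD 0 → x ≤ M := fun x hx hxk => by
    obtain ⟨l, hl, hxl⟩ := hd.mem_iff.1 hx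
    by_cases hlj : l ≤ j
    · exact hd.le_getLastD_of_le hlj (by omega) hxl
    · exact absurd (hd.headD_le_of_le (show j + 1 ≤ l by omega) hl hxl) (by omega)
  refine ⟨(hpos M hMu).trans (by omega),
    ⟨_, hd.mem_iff.2 ⟨j + 1, hj, (hd.isBlock hj).headD_mem⟩, hhigh⟩,
    fun p hp hpi => by have := hbelow p hp (by omega); omega, fun m hm hle => ?_⟩
  obtain ⟨c, rfl⟩ : ∃ c', c = c' + 1 := Nat.exists_eq_succ_of_ne_zero <| by
    have := hcb Bs hd _ (getElem_mem (show j < Bs.length by omega))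
    have := length_pos_iff.2 (hd.isBlock (show j < Bs.length by omega)).1
    omega
  -- the run ends at `i - t`, which can only be `M`, so it lies in the block `Bs[j]`
  have hlast : m + t * c ∈ range' m (c + 1) t := mem_range'.2 ⟨c, c.lt_succ_self, rfl⟩
  have hlast_u : m + t * c ∈ u := Multiset.mem_coe.1 (Multiset.mem_of_le hle hlast)
  rw [mul_add, mul_one] at hm
  have hlastM : m + t * c = M := by
    have := hbelow _ hlast_u (by omega)
    omega
  obtain ⟨B, hB, hBle⟩ := exists_range'_le_of_pairwise c.succ_ne_zero hd.pairwise (hd.1 ▸ hle)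
  obtain rfl : B = Bs[j] :=
    hd.eq_of_mem_of_mem hB (getElem_mem _) (Multiset.mem_coe.1 (Multiset.mem_of_le hBle hlast))
      (hlastM ▸ hMj)
  have hcard : c + 1 ≤ Bs[j].length := by simpa using Multiset.card_le_card hBle
  rw [if_pos (le_antisymm (hcb Bs hd _ hB) hcard)] at hlow
  omega

theorem exists_gap_of_inGap (hd : IsBlockDecomp t u Bs) (hi : InGap c t u i) :
    (1 ≤ i ∧ i + 1 ≤ (Bs.getD 0 []).headD 0) ∨
      ∃ j, j + 1 < Bs.length ∧
        (Bs.getD j []).getLastD 0 + t + (if (Bs.getD j []).length = c then 1 else 0) ≤ i ∧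
        i + 1 ≤ (Bs.getD (j + 1) []).headD 0 := by
  classical
  obtain ⟨hi1, hex, hspread, hrun⟩ := hi
  obtain ⟨hku, hik⟩ := Nat.find_spec hex
  set k := Nat.find hex
  have hmin : ∀ y ∈ u, y < k → y ≤ i := fun y hy hyk =>
    not_lt.1 fun hiy => Nat.find_min hex hyk ⟨hy, hiy⟩
  obtain ⟨l, hl, hkl⟩ := hd.mem_iff.1 hku
  have hkhead : k = Bs[l].headD 0 :=
    hd.eq_headD_of_add_lt hl hkl fun y hy hyk => (hspread y hy (hmin y hy hyk)).trans_lt hik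
  cases l with
  | zero => exact Or.inl ⟨hi1, by rw [getD_eq_getElem _ _ hl]; omega⟩
  | succ j =>
    have hj : j < Bs.length := by omega
    have hMj := (hd.isBlock hj).getLastD_mem
    have hMu : Bs[j].getLastD 0 ∈ u := hd.mem_iff.2 ⟨j, hj, hMj⟩
    have hMk := hd.add_lt_of_lt j.lt_succ_self hl hMj (hd.isBlock hl).headD_mem
    have hMi := hspread _ hMu (hmin _ hMu (by omega))
    refine Or.inr ⟨j, hl, ?_, by rw [getD_eq_getElem _ _ hl]; omega⟩
    rw [getD_eq_getElem _ _ hj]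
    split_ifs with hc
    · refine Nat.succ_le_of_lt (lt_of_le_of_ne hMi fun hMi' => hrun (Bs[j].headD 0) ?_ ?_)
      · rw [← hc, ← (hd.isBlock hj).getLastD_add, hMi']
      · rw [← hc, ← (hd.isBlock hj).eq_range']
        exact Multiset.coe_le.2 (hd.sublist (getElem_mem hj)).subperm
    · omega

theorem inGap_iff (hd : IsBlockDecomp t u Bs) (hcb : CBounded c t u) (hpos : ∀ x ∈ u, 1 ≤ x) :
    InGap c t u i ↔
      (1 ≤ i ∧ i + 1 ≤ (Bs.getD 0 []).headD 0) ∨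
        ∃ j, j + 1 < Bs.length ∧
          (Bs.getD j []).getLastD 0 + t + (if (Bs.getD j []).length = c then 1 else 0) ≤ i ∧
          i + 1 ≤ (Bs.getD (j + 1) []).headD 0 := by
  refine ⟨hd.exists_gap_of_inGap, ?_⟩
  rintro (⟨hi1, hi⟩ | ⟨j, hj, hlow, hhigh⟩)
  · have hBs : 0 < Bs.length := length_pos_iff.2 fun h => by simp [h] at hi
    rw [getD_eq_getElem _ _ hBs] at hi
    exact hd.inGap_of_lt_headD hcb hBs hi1 (by omega)
  · rw [getD_eq_getElem _ _ (by omega)] at hlow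
    rw [getD_eq_getElem _ _ hj] at hhigh
    exact hd.inGap_of_getLastD_lt hcb hpos hj hlow (by omega)

end IsBlockDecomp

/-- For a minimal generator `u` of `I = I_{c,(n,d,t)}` with
maximal block decomposition `B₁ ⊔ … ⊔ B_r`, an index `i` satisfies
"there is `k > i` with `x_k ∣ u`, `x_i·u/x_k ∈ I` and `x_i·u/x_k >_lex u`"
iff `i` belongs to some gap interval of `u`: the `0`-th gap interval
`[1, min(B₁) - 1]`, or for `1 ≤ j ≤ r-1` the `j`-th gap interval, which is
`[max(B_j)+t, min(B_{j+1})-1]` if `|B_j| < c` and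
`[max(B_j)+t+1, min(B_{j+1})-1]` if `|B_j| = c`.
(`u >_lex v` as monomials iff the ascending index list of `u` is
lexicographically smaller.) -/
theorem stmt_7 (c n d t : ℕ) (u : List ℕ) (hu : u ∈ Gen c n d t)
    (Bs : List (List ℕ)) (hBs : IsBlockDecomp t u Bs) (i : ℕ) :
    (∃ k, i < k ∧ k ∈ u ∧ ∃ v ∈ Gen c n d t,
        (↑v : Multiset ℕ) = i ::ₘ ((↑u : Multiset ℕ).erase k) ∧
        List.Lex (· < ·) v u) ↔
      ((1 ≤ i ∧ i + 1 ≤ (Bs.getD 0 []).headD 0) ∨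
        ∃ j, j + 1 < Bs.length ∧
          (Bs.getD j []).getLastD 0 + t +
              (if (Bs.getD j []).length = c then 1 else 0) ≤ i ∧
          i + 1 ≤ (Bs.getD (j + 1) []).headD 0) :=
  (exists_exchange_iff_inGap hu).trans (hBs.inGap_iff hu.2.2.1 fun x hx => (hu.2.2.2 x hx).1)
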